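/- (Remark after Lemma 4 of the paper, Eq. (10), two-mode case.) Let X ∈ ℝ^{n×d}, and let P₁ ∈ ℝ^{n×n} and P₂ ∈ ℝ^{d×d} be orthogonal projection matrices (P₁ᵀ = P₁, P₁² = P₁, and P₂ᵀ = P₂, P₂² = P₂). Then ‖X − P₁ X P₂‖_F² ≤ ‖X − P₁ X‖_F² + ‖X − X P₂‖_F². -/

import Mathlib

/-!
Write `X - P₁ X P₂ = (X - P₁ X) + P₁ (X - X P₂)`. The two summands are orthogonal for the
Frobenius inner product `⟨A, B⟩ = tr (Aᵀ B)`, because `(X - P₁ X)ᵀ P₁ = Xᵀ (P₁ - P₁²) = 0`.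
Pythagoras then gives `‖X - P₁ X P₂‖² = ‖X - P₁ X‖² + ‖P₁ (X - X P₂)‖²`, and the orthogonal
projection `P₁` does not increase the Frobenius norm.
-/

open Matrix

/-- Frobenius norm of a real matrix: `‖A‖_F = sqrt (∑ i j, A i j ^ 2)`. -/
noncomputable def frobNorm {m n : Type*} [Fintype m] [Fintype n]
    (A : Matrix m n ℝ) : ℝ :=
  Real.sqrt (∑ i, ∑ j, (A i j) ^ 2)

section Frobenius

variable {m n k : Type*} [Fintype m]

theorem transpose_sub_mul_mul_eq_zero_of_isProj {P : Matrix m m ℝ} (hPsym : Pᵀ = P)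
    (hPidem : P * P = P) (X : Matrix m n ℝ) (Y : Matrix m k ℝ) :
    (X - P * X)ᵀ * (P * Y) = 0 := by
  rw [transpose_sub, transpose_mul, hPsym, Matrix.sub_mul, Matrix.mul_assoc,
    ← Matrix.mul_assoc P, hPidem, sub_self]

variable [Fintype n]

theorem frobNorm_nonneg (A : Matrix m n ℝ) : 0 ≤ frobNorm A :=
  Real.sqrt_nonneg _

theorem frobNorm_sq_eq_trace (A : Matrix m n ℝ) : frobNorm A ^ 2 = trace (Aᵀ * A) := by
  rw [frobNorm, Real.sq_sqrt (by positivity), Finset.sum_comm]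
  simp only [trace, diag, mul_apply, transpose_apply, sq]

theorem frobNorm_add_sq_of_transpose_mul_eq_zero {B C : Matrix m n ℝ} (h : Bᵀ * C = 0) :
    frobNorm (B + C) ^ 2 = frobNorm B ^ 2 + frobNorm C ^ 2 := by
  have hCB : trace (Cᵀ * B) = 0 := by
    rw [← trace_transpose, transpose_mul, transpose_transpose, h, trace_zero]
  rw [frobNorm_sq_eq_trace, frobNorm_sq_eq_trace, frobNorm_sq_eq_trace, transpose_add,
    Matrix.add_mul, Matrix.mul_add, Matrix.mul_add, trace_add, trace_add, trace_add, h, hCB,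
    trace_zero]
  ring

theorem frobNorm_mul_le_of_isProj {P : Matrix m m ℝ} (hPsym : Pᵀ = P) (hPidem : P * P = P)
    (C : Matrix m n ℝ) : frobNorm (P * C) ≤ frobNorm C := by
  have hpyth := frobNorm_add_sq_of_transpose_mul_eq_zero
    (transpose_sub_mul_mul_eq_zero_of_isProj hPsym hPidem C C)
  rw [sub_add_cancel] at hpyth
  refine (pow_le_pow_iff_left₀ (frobNorm_nonneg _) (frobNorm_nonneg _) two_ne_zero).mp ?_
  rw [hpyth]
  exact le_add_of_nonneg_left (sq_nonneg _)

end Frobenius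

theorem frob_two_mode_projection_bound_general {n d : ℕ}
    (X : Matrix (Fin n) (Fin d) ℝ)
    (P₁ : Matrix (Fin n) (Fin n) ℝ) (P₂ : Matrix (Fin d) (Fin d) ℝ)
    (hP₁sym : P₁ᵀ = P₁) (hP₁idem : P₁ * P₁ = P₁) :
    frobNorm (X - P₁ * X * P₂) ^ 2
      ≤ frobNorm (X - P₁ * X) ^ 2 + frobNorm (X - X * P₂) ^ 2 := by
  have hsplit : X - P₁ * X * P₂ = (X - P₁ * X) + P₁ * (X - X * P₂) := by
    rw [Matrix.mul_sub, Matrix.mul_assoc]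
    abel
  have hcontract : frobNorm (P₁ * (X - X * P₂)) ≤ frobNorm (X - X * P₂) :=
    frobNorm_mul_le_of_isProj hP₁sym hP₁idem _
  rw [hsplit, frobNorm_add_sq_of_transpose_mul_eq_zero
    (transpose_sub_mul_mul_eq_zero_of_isProj hP₁sym hP₁idem X _)]
  gcongr
  exact frobNorm_nonneg _

/-- Pythagorean-type bound (Eq. (10) of the paper, two-mode case): the error of a
simultaneous two-sided orthogonal projection is at most the sum of the single-mode
projection errors. -/
theorem frob_two_mode_projection_bound {n d : ℕ}
    (X : Matrix (Fin n) (Fin d) ℝ)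
    (P₁ : Matrix (Fin n) (Fin n) ℝ) (P₂ : Matrix (Fin d) (Fin d) ℝ)
    (hP₁sym : P₁ᵀ = P₁) (hP₁idem : P₁ * P₁ = P₁)
    (hP₂sym : P₂ᵀ = P₂) (hP₂idem : P₂ * P₂ = P₂) :
    frobNorm (X - P₁ * X * P₂) ^ 2
      ≤ frobNorm (X - P₁ * X) ^ 2 + frobNorm (X - X * P₂) ^ 2 :=
  frob_two_mode_projection_bound_general X P₁ P₂ hP₁sym hP₁idem
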